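/- Suppose p > p_S. Let ν := min{p−1, 1}. Then there exist constants C > 0 and T ∈ ℝ such that |(y*)'(t) − (m/(2(N−1)−3θ)) e^{2mt}| ≤ C e^{2m(1+ν)t} for all t ≤ T; that is, (y*)'(t) = (m/(2(N−1)−3θ)) e^{2mt} + O(e^{2m(1+ν)t}) as t → −∞. -/

import Mathlib

open Real Set Filter Topology MeasureTheory

noncomputable section

/-- The nonlinearity `f(u) = -u + u^p`. -/
def fNL (p u : ℝ) : ℝ := -u + u ^ p

/-- The Sobolev critical exponent `p_S = (N+2)/(N-2)`. -/
def pSob (N : ℕ) : ℝ := ((N : ℝ) + 2) / ((N : ℝ) - 2)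

/-- `θ = 2/(p-1)`. -/
def thetaP (p : ℝ) : ℝ := 2 / (p - 1)

/-- `A = (θ(N-2-θ))^{1/(p-1)}`. -/
def Aconst (N : ℕ) (p : ℝ) : ℝ :=
  (thetaP p * ((N : ℝ) - 2 - thetaP p)) ^ (1 / (p - 1))

/-- `m = (θ(N-2-θ))^{-1/2}`. -/
def mConst (N : ℕ) (p : ℝ) : ℝ :=
  (thetaP p * ((N : ℝ) - 2 - thetaP p)) ^ (-(1 / 2) : ℝ)

/-- `α = m(N-2-2θ)`. -/
def alphaConst (N : ℕ) (p : ℝ) : ℝ :=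
  mConst N p * ((N : ℝ) - 2 - 2 * thetaP p)

/-- The condition `p < p_JL`, where `p_JL = 1 + 4/(N-4-2√(N-1))` for `N ≥ 11` and
`p_JL = ∞` for `N ≤ 10`. -/
def pJLcond (N : ℕ) (p : ℝ) : Prop :=
  11 ≤ N → p < 1 + 4 / ((N : ℝ) - 4 - 2 * Real.sqrt ((N : ℝ) - 1))

/-- `y` is a C² solution of `y'' + α y' - y + y^p - m² e^{2mt} y = 0` on `(-∞, T]`
with `y → 1` as `t → -∞`; `y'`, `y''` are its first and second derivatives. -/
def IsSingODEOn (N : ℕ) (p T : ℝ) (y y' y'' : ℝ → ℝ) : Prop :=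
  (∀ t ∈ Iic T, HasDerivWithinAt y (y' t) (Iic T) t) ∧
  (∀ t ∈ Iic T, HasDerivWithinAt y' (y'' t) (Iic T) t) ∧
  ContinuousOn y'' (Iic T) ∧
  (∀ t ∈ Iic T, y'' t + alphaConst N p * y' t - y t + y t ^ p
      - (mConst N p) ^ 2 * Real.exp (2 * mConst N p * t) * y t = 0) ∧
  Tendsto y atBot (𝓝 1)

/-- `y` is a C² solution of `y'' + α y' - y + y^p - m² e^{2mt} y = 0` on all of `ℝ`
with `y → 1` as `t → -∞`. -/
def IsEntireSingODE (N : ℕ) (p : ℝ) (y y' y'' : ℝ → ℝ) : Prop :=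
  (∀ t : ℝ, HasDerivAt y (y' t) t) ∧
  (∀ t : ℝ, HasDerivAt y' (y'' t) t) ∧
  Continuous y'' ∧
  (∀ t : ℝ, y'' t + alphaConst N p * y' t - y t + y t ^ p
      - (mConst N p) ^ 2 * Real.exp (2 * mConst N p * t) * y t = 0) ∧
  Tendsto y atBot (𝓝 1)

/-- The singular solution `u*(s) = A s^{-θ} y*(m⁻¹ log s)` built from `y*`. -/
def ustar (N : ℕ) (p : ℝ) (y : ℝ → ℝ) (s : ℝ) : ℝ :=
  Aconst N p * s ^ (-(thetaP p)) * y (Real.log s / mConst N p)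

/-- `u` is a C² solution on `[0,∞)` of the IVP `u'' + ((N-1)/s)u' + f(u) = 0`,
`u(0) = γ`, `u'(0) = 0`, with nonlinearity `f(u) = -u + u^p`. -/
def IsIVPSol (N : ℕ) (p γ : ℝ) (u u' u'' : ℝ → ℝ) : Prop :=
  (∀ s ∈ Ici (0:ℝ), HasDerivWithinAt u (u' s) (Ici 0) s) ∧
  (∀ s ∈ Ici (0:ℝ), HasDerivWithinAt u' (u'' s) (Ici 0) s) ∧
  ContinuousOn u'' (Ici 0) ∧
  u 0 = γ ∧ u' 0 = 0 ∧
  (∀ s > (0:ℝ), u'' s + ((N : ℝ) - 1) / s * u' s + fNL p (u s) = 0)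

/-- `u` is a C² solution on `[0,∞)` of the IVP `u'' + ((N-1)/ρ)u' + u^p = 0`,
`u(0) = γ`, `u'(0) = 0`. -/
def IsBarSol (N : ℕ) (p γ : ℝ) (u u' u'' : ℝ → ℝ) : Prop :=
  (∀ ρ ∈ Ici (0:ℝ), HasDerivWithinAt u (u' ρ) (Ici 0) ρ) ∧
  (∀ ρ ∈ Ici (0:ℝ), HasDerivWithinAt u' (u'' ρ) (Ici 0) ρ) ∧
  ContinuousOn u'' (Ici 0) ∧
  u 0 = γ ∧ u' 0 = 0 ∧
  (∀ ρ > (0:ℝ), u'' ρ + ((N : ℝ) - 1) / ρ * u' ρ + u ρ ^ p = 0)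

/-- `s` is the `(k+1)`-th positive critical point of a function whose derivative is `u'`:
`s` is a positive critical point having exactly `k` positive critical points below it. -/
def IsNthCritPt (u' : ℝ → ℝ) (k : ℕ) (s : ℝ) : Prop :=
  0 < s ∧ u' s = 0 ∧ {x : ℝ | 0 < x ∧ x < s ∧ u' x = 0}.encard = (k : ℕ∞)

/-- `U` is a positive C² radial solution of the Neumann problem
`U'' + ((N-1)/r)U' + λ f(U) = 0` on `(0,1)`, `U'(0) = U'(1) = 0`, `U > 0` on `[0,1]`. -/
def NeumannSol (N : ℕ) (p lam : ℝ) (U U' U'' : ℝ → ℝ) : Prop :=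
  (∀ r ∈ Icc (0:ℝ) 1, HasDerivWithinAt U (U' r) (Icc 0 1) r) ∧
  (∀ r ∈ Icc (0:ℝ) 1, HasDerivWithinAt U' (U'' r) (Icc 0 1) r) ∧
  ContinuousOn U'' (Icc 0 1) ∧
  (∀ r ∈ Ioo (0:ℝ) 1, U'' r + ((N : ℝ) - 1) / r * U' r + lam * fNL p (U r) = 0) ∧
  U' 0 = 0 ∧ U' 1 = 0 ∧ (∀ r ∈ Icc (0:ℝ) 1, 0 < U r)

/-- `(lam, U)` is a singular solution of the Neumann problem whose graph meets `1`
exactly `n` times: `U` is C² on `(0,1)`, continuous on `(0,1]`, `U'(1) = 0`, it solves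
`U'' + ((N-1)/r)U' + λ f(U) = 0` on `(0,1)`, satisfies the asymptotics
`U(r) = A(√λ r)^{-θ}(1+o(1))` as `r ↓ 0` (i.e. `r^θ U(r) → A λ^{-θ/2}`),
`U - 1` has exactly `n` zeros in `(0,1]`, and `U > 0` on `(0,1]`. -/
def SingBVPSol (N : ℕ) (p lam : ℝ) (n : ℕ) (U U' U'' : ℝ → ℝ) : Prop :=
  (∀ r ∈ Ioc (0:ℝ) 1, HasDerivWithinAt U (U' r) (Ioc 0 1) r) ∧
  (∀ r ∈ Ioo (0:ℝ) 1, HasDerivAt U' (U'' r) r) ∧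
  ContinuousOn U (Ioc 0 1) ∧
  ContinuousOn U'' (Ioo 0 1) ∧
  (∀ r ∈ Ioo (0:ℝ) 1, U'' r + ((N : ℝ) - 1) / r * U' r + lam * fNL p (U r) = 0) ∧
  U' 1 = 0 ∧
  Tendsto (fun r => r ^ thetaP p * U r) (𝓝[>] (0:ℝ))
    (𝓝 (Aconst N p * lam ^ (-(thetaP p) / 2))) ∧
  {r ∈ Ioc (0:ℝ) 1 | U r = 1}.encard = (n : ℕ∞) ∧
  (∀ r ∈ Ioc (0:ℝ) 1, 0 < U r)

open Asymptotics

/-!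
Write `y* = 1 + w`. Then `w'' + α w' + (p - 1) w = m² e^{2mt} (1 + w) - R(w)` with
`R(w) = (1 + w)^p - 1 - p w = O(w²)`. The roots `l₁, l₂` of `X² + αX + (p - 1)` have negative
real parts, so the operator factors as `(d/dt - l₁)(d/dt - l₂)`, and solving each first-order
factor backwards from `-∞` with an integrating factor shows that a bounded solution inherits the
exponential decay of its forcing. A first pass, in which `R(w) = o(w)` is absorbed by a bootstrap,
gives `w = O(e^{2mt})`. Since `(2m)² + 2αm + (p - 1) = 2m²E` with `E = 2(N-1) - 3θ > 0`, the
function `z = w - e^{2mt}/(2E)` has forcing `m² e^{2mt} w - R(w) = O(e^{4mt})`, hence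
`z' = (y*)' - (m/E) e^{2mt} = O(e^{4mt})`, and `4m ≥ 2m(1 + ν)`.
-/

theorem hasDerivAt_const_mul_exp_mul (c k t : ℝ) :
    HasDerivAt (fun s => c * exp (k * s)) (c * k * exp (k * t)) t := by
  simpa [mul_comm, mul_assoc] using ((hasDerivAt_id t).const_mul k).exp.const_mul c

theorem Convex.abs_sub_sub_mul_le_sq {s : Set ℝ} (hs : Convex ℝ s) {φ φ' φ'' : ℝ → ℝ}
    {C x₀ x : ℝ} (hφ : ∀ y ∈ s, HasDerivWithinAt φ (φ' y) s y)
    (hφ' : ∀ y ∈ s, HasDerivWithinAt φ' (φ'' y) s y) (hC : ∀ y ∈ s, |φ'' y| ≤ C)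
    (hx₀ : x₀ ∈ s) (hx : x ∈ s) :
    |φ x - φ x₀ - φ' x₀ * (x - x₀)| ≤ C * (x - x₀) ^ 2 := by
  have hC₀ : 0 ≤ C := (abs_nonneg _).trans (hC x₀ hx₀)
  have hseg : uIcc x₀ x ⊆ s := by
    rw [← segment_eq_uIcc]; exact hs.segment_subset hx₀ hx
  have hψ : ∀ y ∈ uIcc x₀ x,
      HasDerivWithinAt (fun y => φ y - φ' x₀ * y) (φ' y - φ' x₀) (uIcc x₀ x) y := fun y hy => by
    simpa using ((hφ y (hseg hy)).mono hseg).fun_sub ((hasDerivWithinAt_id y _).const_mul (φ' x₀))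
  have hbound : ∀ y ∈ uIcc x₀ x, ‖φ' y - φ' x₀‖ ≤ C * |x - x₀| := fun y hy => by
    calc ‖φ' y - φ' x₀‖ ≤ C * ‖y - x₀‖ :=
          hs.norm_image_sub_le_of_norm_hasDerivWithin_le hφ' hC hx₀ (hseg hy)
      _ ≤ C * |x - x₀| := mul_le_mul_of_nonneg_left (abs_sub_left_of_mem_uIcc hy) hC₀
  have := convex_uIcc x₀ x |>.norm_image_sub_le_of_norm_hasDerivWithin_le hψ hbound
    left_mem_uIcc right_mem_uIcc
  rw [Real.norm_eq_abs, Real.norm_eq_abs, mul_assoc, ← sq, sq_abs] at this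
  convert this using 2; ring

theorem isBigO_rpow_sub_one_sub (p : ℝ) :
    (fun u : ℝ => u ^ p - 1 - p * (u - 1)) =O[𝓝 1] fun u => (u - 1) ^ 2 := by
  set s := Icc (1 / 2 : ℝ) (3 / 2)
  have hs₀ : ∀ y ∈ s, y ≠ 0 := fun y hy => by linarith [hy.1]
  obtain ⟨C, hC⟩ := isCompact_Icc.exists_bound_of_continuousOn
    (f := fun y => p * ((p - 1) * y ^ (p - 1 - 1)))
    (continuousOn_const.mul (continuousOn_const.mul (continuousOn_id.rpow_const
      fun y hy => Or.inl (hs₀ y hy))))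
  refine .of_bound C ?_
  filter_upwards [Icc_mem_nhds (by norm_num : (1 / 2 : ℝ) < 1) (by norm_num : (1 : ℝ) < 3 / 2)]
    with u hu
  have := (convex_Icc _ _).abs_sub_sub_mul_le_sq (φ := fun y => y ^ p)
    (fun y hy => (hasDerivAt_rpow_const (Or.inl (hs₀ y hy))).hasDerivWithinAt)
    (fun y hy => ((hasDerivAt_rpow_const (Or.inl (hs₀ y hy))).const_mul p).hasDerivWithinAt)
    hC (by norm_num [s] : (1 : ℝ) ∈ s) hu
  simpa using this

theorem frequently_abs_deriv_le {w w' : ℝ → ℝ} {T M : ℝ}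
    (hw : ∀ t ≤ T, HasDerivAt w (w' t) t) (hM : ∀ t ≤ T, |w t| ≤ M) :
    ∃ᶠ t in atBot, |w' t| ≤ 2 * M := by
  refine frequently_atBot.2 fun s => ?_
  set s₀ := min s T
  have hs₀ : s₀ ≤ T := min_le_right _ _
  obtain ⟨ξ, hξ, hslope⟩ := exists_hasDerivAt_eq_slope w w' (sub_one_lt s₀)
    (fun t ht => (hw t (ht.2.trans hs₀)).continuousAt.continuousWithinAt)
    (fun t ht => hw t (ht.2.le.trans hs₀))
  refine ⟨ξ, hξ.2.le.trans (min_le_left _ _), ?_⟩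
  rw [hslope, sub_sub_cancel, div_one]
  calc |w s₀ - w (s₀ - 1)| ≤ |w s₀| + |w (s₀ - 1)| := abs_sub _ _
    _ ≤ 2 * M := by linarith [hM s₀ hs₀, hM (s₀ - 1) (by linarith)]

theorem norm_le_of_hasDerivAt_eq_mul_add {l : ℂ} (hl : l.re < 0) {f g : ℝ → ℂ}
    {T K B M β : ℝ} (hβ : l.re < β) (hK : 0 ≤ K) (hB : 0 ≤ B)
    (hf : ∀ t ≤ T, HasDerivAt f (l * f t + g t) t)
    (hg : ∀ t ≤ T, ‖g t‖ ≤ K * exp (β * t) + B) (hfM : ∃ᶠ t in atBot, ‖f t‖ ≤ M) :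
    ∀ t ≤ T, ‖f t‖ ≤ K / (β - l.re) * exp (β * t) + B / -l.re := by
  -- `F = e^{-lτ} f` has `F' = e^{-lτ} g`: fence `‖F‖` on `[s, t]` by a primitive `Φ` of the bound
  -- on `‖F'‖`, then let `s → -∞` along times where `‖f s‖ ≤ M`.
  intro t ht
  set b₁ := β - l.re
  set b₂ := -l.re
  have hb₁ : 0 < b₁ := sub_pos.2 hβ
  have hb₂ : 0 < b₂ := neg_pos.2 hl
  set Φ : ℝ → ℝ := fun τ => K / b₁ * exp (b₁ * τ) + B / b₂ * exp (b₂ * τ)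
  have hΦ : ∀ τ, HasDerivAt Φ (exp (b₂ * τ) * (K * exp (β * τ) + B)) τ := fun τ => by
    refine ((hasDerivAt_const_mul_exp_mul (K / b₁) b₁ τ).fun_add
      (hasDerivAt_const_mul_exp_mul (B / b₂) b₂ τ)).congr_deriv ?_
    simp only [b₁, b₂]
    rw [show (β - l.re) * τ = β * τ + -l.re * τ by ring, exp_add]
    field_simp [(sub_pos.2 hβ).ne', hl.ne]
  set F : ℝ → ℂ := fun τ => Complex.exp (-l * τ) * f τ
  have hF : ∀ τ, ‖F τ‖ = exp (b₂ * τ) * ‖f τ‖ := fun τ => by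
    simp [F, b₂, Complex.norm_exp]
  have hF' : ∀ τ ≤ T, HasDerivAt F (Complex.exp (-l * τ) * g τ) τ := fun τ hτ => by
    have h := (((hasDerivAt_id τ).ofReal_comp.const_mul (-l)).cexp).mul (hf τ hτ)
    refine h.congr_deriv ?_
    simp only [id, Complex.ofReal_one, mul_one]
    ring
  have key : ∀ s ≤ t, ‖f t‖ ≤ exp (l.re * (t - s)) * ‖f s‖ + (K / b₁ * exp (β * t) + B / b₂) := by
    intro s hs
    have hfence := image_norm_le_of_norm_deriv_right_le_deriv_boundary (a := s) (b := t)
      (B := fun τ => ‖F s‖ + Φ τ)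
      (fun τ hτ => (hF' τ (hτ.2.trans ht)).continuousAt.continuousWithinAt)
      (fun τ hτ => (hF' τ (hτ.2.le.trans ht)).hasDerivWithinAt)
      (by simp only [le_add_iff_nonneg_right, Φ]; positivity)
      (fun τ => (hΦ τ).const_add _)
      (fun τ hτ => by
        rw [norm_mul, Complex.norm_exp]
        simp only [Complex.mul_re, Complex.neg_re, Complex.ofReal_re, Complex.neg_im,
          Complex.ofReal_im, mul_zero, sub_zero, b₂]
        exact mul_le_mul_of_nonneg_left (hg τ (hτ.2.le.trans ht)) (exp_pos _).le)
      ⟨hs, le_rfl⟩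
    rw [hF, hF] at hfence
    have := mul_le_mul_of_nonneg_left hfence (exp_pos (l.re * t)).le
    have e₁ : exp (l.re * t) * exp (b₂ * t) = 1 := by rw [← exp_add, ← exp_zero]; congr 1; ring
    have e₂ : exp (l.re * t) * exp (b₂ * s) = exp (l.re * (t - s)) := by
      rw [← exp_add]; congr 1; ring
    have e₃ : exp (l.re * t) * exp (b₁ * t) = exp (β * t) := by rw [← exp_add]; congr 1; ring
    have e₄ : K / b₁ * exp (β * t) + B / b₂ = exp (l.re * t) * Φ t := by
      simp only [Φ]; linear_combination (-(K / b₁)) * e₃ - B / b₂ * e₁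
    rw [e₄, ← e₂]
    linear_combination this - ‖f t‖ * e₁
  have hlim : Tendsto (fun s => exp (l.re * (t - s)) * M + (K / b₁ * exp (β * t) + B / b₂))
      atBot (𝓝 (K / b₁ * exp (β * t) + B / b₂)) := by
    have h : Tendsto (fun s => l.re * (t - s)) atBot atBot :=
      (tendsto_atBot_atTop.2 fun r => ⟨t - r, fun s hs => by linarith⟩).const_mul_atTop_of_neg hl
    simpa using ((tendsto_exp_atBot.comp h).mul_const M).add_const (K / b₁ * exp (β * t) + B / b₂)
  refine ge_of_tendsto_of_frequently hlim ((hfM.and_eventually (eventually_le_atBot t)).mono ?_)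
  rintro s ⟨hsM, hst⟩
  exact (key s hst).trans (by gcongr)

theorem exists_roots_re_neg {a q : ℝ} (ha : 0 < a) (hq : 0 < q) :
    ∃ l₁ l₂ : ℂ, l₁ + l₂ = -a ∧ l₁ * l₂ = q ∧ l₁.re < 0 ∧ l₂.re < 0 := by
  rcases le_or_gt (a ^ 2 - 4 * q) 0 with hD | hD
  · set s := √(4 * q - a ^ 2)
    have hs : s ^ 2 = 4 * q - a ^ 2 := sq_sqrt (by linarith)
    refine ⟨⟨-a / 2, s / 2⟩, ⟨-a / 2, -s / 2⟩, ?_, ?_, ?_, ?_⟩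
    · apply Complex.ext <;> simp; ring
    · apply Complex.ext <;> simp <;> nlinarith
    all_goals simp only [neg_div, Left.neg_neg_iff]; positivity
  · set s := √(a ^ 2 - 4 * q)
    have hs : s ^ 2 = a ^ 2 - 4 * q := sq_sqrt (by linarith)
    have hsa : s < a := by nlinarith [sqrt_nonneg (a ^ 2 - 4 * q)]
    refine ⟨((-a + s) / 2 : ℝ), ((-a - s) / 2 : ℝ), ?_, ?_, ?_, ?_⟩
    · push_cast; ring
    · rw [← Complex.ofReal_mul]; congr 1; nlinarith
    · simpa using by linarith
    · simpa using by linarith [sqrt_nonneg (a ^ 2 - 4 * q)]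

section LinearSecondOrder

variable {a q : ℝ} {l₁ l₂ : ℂ} {w w' w'' : ℝ → ℝ} {T K B M β : ℝ}

theorem hasDerivAt_deriv_sub_mul (hsum : l₁ + l₂ = -a) (hprod : l₁ * l₂ = q) {t : ℝ}
    (hw : HasDerivAt w (w' t) t) (hw' : HasDerivAt w' (w'' t) t) :
    HasDerivAt (fun s => (w' s : ℂ) - l₂ * w s)
      (l₁ * ((w' t : ℂ) - l₂ * w t) + ↑(w'' t + a * w' t + q * w t)) t := by
  refine (hw'.ofReal_comp.sub (hw.ofReal_comp.const_mul l₂)).congr_deriv ?_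
  push_cast
  linear_combination -(w' t : ℂ) * hsum + (w t : ℂ) * hprod

theorem norm_deriv_sub_mul_le (hsum : l₁ + l₂ = -a) (hprod : l₁ * l₂ = q) (hl₁ : l₁.re < 0)
    (hβ : l₁.re < β) (hK : 0 ≤ K) (hB : 0 ≤ B)
    (hw : ∀ t ≤ T, HasDerivAt w (w' t) t) (hw' : ∀ t ≤ T, HasDerivAt w' (w'' t) t)
    (hM : ∀ t ≤ T, |w t| ≤ M)
    (hh : ∀ t ≤ T, |w'' t + a * w' t + q * w t| ≤ K * exp (β * t) + B) :
    ∀ t ≤ T, ‖(w' t : ℂ) - l₂ * w t‖ ≤ K / (β - l₁.re) * exp (β * t) + B / -l₁.re := by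
  refine norm_le_of_hasDerivAt_eq_mul_add hl₁ hβ hK hB
    (fun t ht => hasDerivAt_deriv_sub_mul hsum hprod (hw t ht) (hw' t ht))
    (fun t ht => by rw [Complex.norm_real, Real.norm_eq_abs]; exact hh t ht)
    (M := 2 * M + ‖l₂‖ * M) ?_
  refine ((frequently_abs_deriv_le hw hM).and_eventually (eventually_le_atBot T)).mono ?_
  rintro t ⟨hw't, htT⟩
  calc ‖(w' t : ℂ) - l₂ * w t‖ ≤ |w' t| + ‖l₂‖ * |w t| := by
        simpa using norm_sub_le (w' t : ℂ) (l₂ * w t)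
    _ ≤ 2 * M + ‖l₂‖ * M := by gcongr; exact hM t htT

theorem abs_le_of_linear_second_order (hsum : l₁ + l₂ = -a) (hprod : l₁ * l₂ = q)
    (hl₁ : l₁.re < 0) (hl₂ : l₂.re < 0) (hβ₁ : l₁.re < β) (hβ₂ : l₂.re < β)
    (hK : 0 ≤ K) (hB : 0 ≤ B)
    (hw : ∀ t ≤ T, HasDerivAt w (w' t) t) (hw' : ∀ t ≤ T, HasDerivAt w' (w'' t) t)
    (hM : ∀ t ≤ T, |w t| ≤ M)
    (hh : ∀ t ≤ T, |w'' t + a * w' t + q * w t| ≤ K * exp (β * t) + B) :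
    ∀ t ≤ T, |w t| ≤ K / (β - l₁.re) / (β - l₂.re) * exp (β * t) + B / -l₁.re / -l₂.re := by
  have hv := norm_deriv_sub_mul_le hsum hprod hl₁ hβ₁ hK hB hw hw' hM hh
  intro t ht
  simpa using norm_le_of_hasDerivAt_eq_mul_add (f := fun s => (w s : ℂ)) hl₂ hβ₂
    (div_nonneg hK (sub_pos.2 hβ₁).le) (div_nonneg hB (neg_pos.2 hl₁).le)
    (fun s hs => (hw s hs).ofReal_comp.congr_deriv (by ring)) hv
    (Eventually.frequently ((eventually_le_atBot T).mono fun s hs => by simpa using hM s hs)) t ht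

theorem abs_le_exp_of_perturbed_linear_second_order (hsum : l₁ + l₂ = -a)
    (hprod : l₁ * l₂ = q) (hl₁ : l₁.re < 0) (hl₂ : l₂.re < 0) (hβ : 0 ≤ β) (hK : 0 ≤ K)
    {δ : ℝ} (hδ₀ : 0 ≤ δ) (hδ : 2 * δ ≤ l₁.re * l₂.re)
    (hw : ∀ t ≤ T, HasDerivAt w (w' t) t) (hw' : ∀ t ≤ T, HasDerivAt w' (w'' t) t)
    (hM : ∀ t ≤ T, |w t| ≤ M)
    (hh : ∀ t ≤ T, |w'' t + a * w' t + q * w t| ≤ K * exp (β * t) + δ * |w t|) :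
    ∀ t ≤ T, |w t| ≤ 2 * (K / (β - l₁.re) / (β - l₂.re)) * exp (β * t) := by
  intro t ht
  -- bootstrap: bound `δ |w|` by the constant forcing `δ W`, where `W = sup_{τ ≤ t} |w τ|`
  set W := sSup ((fun τ => |w τ|) '' Iic t)
  have hbdd : BddAbove ((fun τ => |w τ|) '' Iic t) :=
    ⟨M, by rintro _ ⟨τ, hτ, rfl⟩; exact hM τ (hτ.trans ht)⟩
  have hle : ∀ τ ≤ t, |w τ| ≤ W := fun τ hτ => le_csSup hbdd ⟨τ, hτ, rfl⟩
  have hW₀ : 0 ≤ W := (abs_nonneg _).trans (hle t le_rfl)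
  have key := abs_le_of_linear_second_order hsum hprod hl₁ hl₂ (by linarith) (by linarith) hK
    (mul_nonneg hδ₀ hW₀) (fun τ hτ => hw τ (hτ.trans ht)) (fun τ hτ => hw' τ (hτ.trans ht))
    (fun τ hτ => hM τ (hτ.trans ht))
    (fun τ hτ => (hh τ (hτ.trans ht)).trans
      (add_le_add_right (mul_le_mul_of_nonneg_left (hle τ hτ) hδ₀) _))
  have hW : W ≤ K / (β - l₁.re) / (β - l₂.re) * exp (β * t) + W / 2 := by
    refine csSup_le ⟨_, t, le_refl t, rfl⟩ ?_
    rintro _ ⟨τ, hτ, rfl⟩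
    refine (key τ hτ).trans (add_le_add ?_ ?_)
    · exact mul_le_mul_of_nonneg_left (exp_le_exp.2 (mul_le_mul_of_nonneg_left hτ hβ))
        (div_nonneg (div_nonneg hK (by linarith)) (by linarith))
    · rw [div_div, neg_mul_neg, div_le_iff₀ (mul_pos_of_neg_of_neg hl₁ hl₂)]
      nlinarith
  linarith [hle t le_rfl]

theorem isBigO_exp_of_linear_second_order (ha : 0 < a) (hq : 0 < q) (hβ : 0 ≤ β)
    (hw : ∀ t, HasDerivAt w (w' t) t) (hw' : ∀ t, HasDerivAt w' (w'' t) t)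
    (hbdd : w =O[atBot] fun _ => (1 : ℝ)) {g : ℝ → ℝ} (hg : g =O[atBot] fun t => exp (β * t))
    (hh : (fun t => w'' t + a * w' t + q * w t - g t) =o[atBot] w) :
    w =O[atBot] fun t => exp (β * t) := by
  obtain ⟨l₁, l₂, hsum, hprod, hl₁, hl₂⟩ := exists_roots_re_neg ha hq
  have hρ : 0 < l₁.re * l₂.re / 2 := half_pos (mul_pos_of_neg_of_neg hl₁ hl₂)
  obtain ⟨K, hK, hgK⟩ := hg.exists_nonneg
  obtain ⟨M, hM⟩ := hbdd.bound
  obtain ⟨T, hT⟩ := eventually_atBot.1 ((hgK.bound.and (hh.def hρ)).and hM)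
  refine .of_bound (2 * (K / (β - l₁.re) / (β - l₂.re))) (eventually_atBot.2 ⟨T, fun t ht => ?_⟩)
  refine (abs_le_exp_of_perturbed_linear_second_order hsum hprod hl₁ hl₂ hβ hK hρ.le (by linarith)
    (fun t _ => hw t) (fun t _ => hw' t) (M := M) (fun t ht => by simpa using (hT t ht).2)
    (fun t ht => ?_) t ht).trans_eq (by simp)
  obtain ⟨⟨hgt, hht⟩, -⟩ := hT t ht
  simp only [Real.norm_eq_abs, abs_exp] at hgt hht
  calc |w'' t + a * w' t + q * w t| ≤ |g t| + |w'' t + a * w' t + q * w t - g t| := by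
        simpa using abs_add_le (g t) (w'' t + a * w' t + q * w t - g t)
    _ ≤ K * exp (β * t) + l₁.re * l₂.re / 2 * |w t| := add_le_add hgt hht

theorem isBigO_deriv_exp_of_linear_second_order (ha : 0 < a) (hq : 0 < q) (hβ : 0 ≤ β)
    (hw : ∀ t, HasDerivAt w (w' t) t) (hw' : ∀ t, HasDerivAt w' (w'' t) t)
    (hbdd : w =O[atBot] fun _ => (1 : ℝ))
    (hh : (fun t => w'' t + a * w' t + q * w t) =O[atBot] fun t => exp (β * t)) :
    w' =O[atBot] fun t => exp (β * t) := by
  obtain ⟨l₁, l₂, hsum, hprod, hl₁, hl₂⟩ := exists_roots_re_neg ha hq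
  obtain ⟨K, hK, hhK⟩ := hh.exists_nonneg
  obtain ⟨M, hM⟩ := hbdd.bound
  obtain ⟨T, hT⟩ := eventually_atBot.1 (hhK.bound.and hM)
  have hM' : ∀ t ≤ T, |w t| ≤ M := fun t ht => by simpa using (hT t ht).2
  have hh' : ∀ t ≤ T, |w'' t + a * w' t + q * w t| ≤ K * exp (β * t) + 0 := fun t ht => by
    simpa using (hT t ht).1
  have hv := norm_deriv_sub_mul_le hsum hprod hl₁ (by linarith) hK le_rfl (fun t _ => hw t)
    (fun t _ => hw' t) hM' hh'
  have hw₀ := abs_le_of_linear_second_order hsum hprod hl₁ hl₂ (by linarith) (by linarith) hK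
    le_rfl (fun t _ => hw t) (fun t _ => hw' t) hM' hh'
  refine .of_bound (K / (β - l₁.re) + ‖l₂‖ * (K / (β - l₁.re) / (β - l₂.re)))
    (eventually_atBot.2 ⟨T, fun t ht => ?_⟩)
  calc ‖w' t‖ = ‖((w' t : ℂ) - l₂ * w t) + l₂ * w t‖ := by simp
    _ ≤ ‖(w' t : ℂ) - l₂ * w t‖ + ‖l₂‖ * |w t| := by
        simpa using norm_add_le ((w' t : ℂ) - l₂ * w t) (l₂ * w t)
    _ ≤ K / (β - l₁.re) * exp (β * t) + ‖l₂‖ * (K / (β - l₁.re) / (β - l₂.re) * exp (β * t)) := by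
        gcongr
        · simpa using hv t ht
        · simpa using hw₀ t ht
    _ = _ := by simp; ring

end LinearSecondOrder

section SingularConstants

variable {N : ℕ} {p : ℝ}

theorem thetaP_pos (hp : 1 < p) : 0 < thetaP p := div_pos two_pos (sub_pos.2 hp)

theorem two_mul_thetaP_lt (hN : 3 ≤ N) (hp : 1 < p) (hpS : pSob N < p) :
    2 * thetaP p < N - 2 := by
  have hN2 : (0 : ℝ) < N - 2 := by
    have : (3 : ℝ) ≤ N := by exact_mod_cast hN
    linarith
  rw [pSob, div_lt_iff₀ hN2] at hpS
  rw [thetaP, ← mul_div_assoc, div_lt_iff₀ (sub_pos.2 hp)]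
  nlinarith

theorem thetaP_mul_pos (hN : 3 ≤ N) (hp : 1 < p) (hpS : pSob N < p) :
    0 < thetaP p * (N - 2 - thetaP p) := by
  have := thetaP_pos hp
  have := two_mul_thetaP_lt hN hp hpS
  nlinarith

theorem mConst_pos (hN : 3 ≤ N) (hp : 1 < p) (hpS : pSob N < p) : 0 < mConst N p :=
  rpow_pos_of_pos (thetaP_mul_pos hN hp hpS) _

theorem alphaConst_pos (hN : 3 ≤ N) (hp : 1 < p) (hpS : pSob N < p) : 0 < alphaConst N p :=
  mul_pos (mConst_pos hN hp hpS) (by linarith [two_mul_thetaP_lt hN hp hpS])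

theorem mConst_sq_mul (hN : 3 ≤ N) (hp : 1 < p) (hpS : pSob N < p) :
    mConst N p ^ 2 * (thetaP p * (N - 2 - thetaP p)) = 1 := by
  have hx := thetaP_mul_pos hN hp hpS
  rw [mConst, ← rpow_natCast, ← rpow_mul hx.le, show -(1 / 2 : ℝ) * (2 : ℕ) = -1 by norm_num,
    rpow_neg_one, inv_mul_cancel₀ hx.ne']

theorem charPoly_two_mConst (hN : 3 ≤ N) (hp : 1 < p) (hpS : pSob N < p) :
    (2 * mConst N p) ^ 2 + alphaConst N p * (2 * mConst N p) + (p - 1) =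
      2 * mConst N p ^ 2 * (2 * ((N : ℝ) - 1) - 3 * thetaP p) := by
  have hm := mConst_sq_mul hN hp hpS
  have hθ : thetaP p * (p - 1) = 2 := div_mul_cancel₀ 2 (sub_pos.2 hp).ne'
  have hq : p - 1 = 2 * mConst N p ^ 2 * (N - 2 - thetaP p) := by
    apply mul_left_cancel₀ (thetaP_pos hp).ne'
    linear_combination hθ - 2 * hm
  rw [alphaConst, hq]
  ring

end SingularConstants

theorem isBigO_exp_mul_atBot {a b : ℝ} (h : b ≤ a) :
    (fun t => exp (a * t)) =O[atBot] fun t => exp (b * t) := by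
  refine .of_bound 1 ?_
  filter_upwards [eventually_le_atBot 0] with t ht
  simpa using mul_le_mul_of_nonpos_right h ht

namespace IsEntireSingODE

variable {N : ℕ} {p : ℝ} {ys ys' ys'' : ℝ → ℝ}

theorem linearized (hys : IsEntireSingODE N p ys ys' ys'') (t : ℝ) :
    ys'' t + alphaConst N p * ys' t + (p - 1) * (ys t - 1) =
      mConst N p ^ 2 * exp (2 * mConst N p * t) * ys t - (ys t ^ p - 1 - p * (ys t - 1)) := by
  linear_combination hys.2.2.2.1 t

theorem tendsto_sub_one (hys : IsEntireSingODE N p ys ys' ys'') :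
    Tendsto (fun t => ys t - 1) atBot (𝓝 0) := by
  simpa using hys.2.2.2.2.sub_const 1

theorem isBigO_rpow_remainder (hys : IsEntireSingODE N p ys ys' ys'') :
    (fun t => ys t ^ p - 1 - p * (ys t - 1)) =O[atBot] fun t => (ys t - 1) ^ 2 :=
  (isBigO_rpow_sub_one_sub p).comp_tendsto hys.2.2.2.2

theorem isBigO_sub_one (hN : 3 ≤ N) (hp : 1 < p) (hpS : pSob N < p)
    (hys : IsEntireSingODE N p ys ys' ys'') :
    (fun t => ys t - 1) =O[atBot] fun t => exp (2 * mConst N p * t) := by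
  have hw₀ := hys.tendsto_sub_one
  have hR := hys.isBigO_rpow_remainder
  have hlin := hys.linearized
  obtain ⟨hd, hd', -, -, hlim⟩ := hys
  have hsq : (fun t => (ys t - 1) ^ 2) =o[atBot] fun t => ys t - 1 := by
    simpa [sq] using (isLittleO_one_iff ℝ).2 hw₀ |>.mul_isBigO (isBigO_refl _ atBot)
  refine isBigO_exp_of_linear_second_order (alphaConst_pos hN hp hpS) (sub_pos.2 hp)
    (by linarith [mConst_pos hN hp hpS]) (fun t => (hd t).sub_const 1) hd' (hw₀.isBigO_one ℝ)
    (g := fun t => mConst N p ^ 2 * exp (2 * mConst N p * t) * ys t) ?_ ?_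
  · simpa using ((isBigO_refl _ atBot).const_mul_left _).mul (hlim.isBigO_one ℝ)
  · simpa [hlin] using (hR.trans_isLittleO hsq).neg_left

theorem isBigO_deriv_sub (hN : 3 ≤ N) (hp : 1 < p) (hpS : pSob N < p)
    (hys : IsEntireSingODE N p ys ys' ys'') :
    (fun t => ys' t - mConst N p / (2 * ((N : ℝ) - 1) - 3 * thetaP p) * exp (2 * mConst N p * t))
      =O[atBot] fun t => exp (4 * mConst N p * t) := by
  have hw := hys.isBigO_sub_one hN hp hpS
  have hm := mConst_pos hN hp hpS
  have hE : 0 < 2 * ((N : ℝ) - 1) - 3 * thetaP p := by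
    linarith [two_mul_thetaP_lt hN hp hpS, thetaP_pos hp]
  have hchar := charPoly_two_mConst hN hp hpS
  have hlin := hys.linearized
  have hw₀ := hys.tendsto_sub_one
  have hR := hys.isBigO_rpow_remainder
  obtain ⟨hd, hd', -, -, -⟩ := hys
  set m := mConst N p
  set E := 2 * ((N : ℝ) - 1) - 3 * thetaP p
  have hexp : Tendsto (fun t => exp (2 * m * t)) atBot (𝓝 0) :=
    tendsto_exp_atBot.comp (tendsto_id.const_mul_atBot (by positivity))
  have hforce : ∀ t, ys'' t - m / E * (2 * m) * exp (2 * m * t)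
      + alphaConst N p * (ys' t - m / E * exp (2 * m * t))
      + (p - 1) * (ys t - 1 - 1 / (2 * E) * exp (2 * m * t))
      = m ^ 2 * exp (2 * m * t) * (ys t - 1) - (ys t ^ p - 1 - p * (ys t - 1)) := fun t => by
    have := hlin t
    generalize exp (2 * m * t) = e at this ⊢
    field_simp
    linear_combination 2 * E * this - e * hchar
  have he : ∀ t, exp (2 * m * t) * exp (2 * m * t) = exp (4 * m * t) := fun t => by
    rw [← exp_add]; ring_nf
  refine isBigO_deriv_exp_of_linear_second_order (alphaConst_pos hN hp hpS) (sub_pos.2 hp)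
    (by positivity) (w := fun t => ys t - 1 - 1 / (2 * E) * exp (2 * m * t))
    (w'' := fun t => ys'' t - m / E * (2 * m) * exp (2 * m * t)) (fun t => ?_) (fun t => ?_) ?_ ?_
  · refine (((hd t).sub_const 1).sub (hasDerivAt_const_mul_exp_mul _ _ t)).congr_deriv ?_
    field_simp
  · exact (hd' t).sub (hasDerivAt_const_mul_exp_mul _ _ t)
  · simpa using (hw₀.sub (hexp.const_mul (1 / (2 * E)))).isBigO_one ℝ
  · simp_rw [hforce, ← he]
    refine (((isBigO_refl _ atBot).const_mul_left (m ^ 2)).mul hw).sub ?_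
    simpa [sq] using hR.trans (hw.pow 2)

end IsEntireSingODE

/-- asymptotics of `(y*)'` as `t → -∞`:
`(y*)'(t) = (m/(2(N-1)-3θ)) e^{2mt} + O(e^{2m(1+ν)t})` with `ν = min{p-1,1}`. -/
theorem ystar_deriv_asymptotics (N : ℕ) (hN : 3 ≤ N) (p : ℝ) (hp : 1 < p)
    (hpS : pSob N < p)
    (ys ys' ys'' : ℝ → ℝ) (hys : IsEntireSingODE N p ys ys' ys'') :
    ∃ C > (0:ℝ), ∃ T : ℝ, ∀ t ≤ T,
      |ys' t - mConst N p / (2 * ((N : ℝ) - 1) - 3 * thetaP p)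
          * Real.exp (2 * mConst N p * t)|
        ≤ C * Real.exp (2 * mConst N p * (1 + min (p - 1) 1) * t) := by
  have hν : 2 * mConst N p * (1 + min (p - 1) 1) ≤ 4 * mConst N p := by
    nlinarith [min_le_right (p - 1) 1, mConst_pos hN hp hpS]
  obtain ⟨C, hC, hCb⟩ :=
    ((hys.isBigO_deriv_sub hN hp hpS).trans (isBigO_exp_mul_atBot hν)).exists_pos
  obtain ⟨T, hT⟩ := eventually_atBot.1 hCb.bound
  exact ⟨C, hC, T, fun t ht => by simpa using hT t ht⟩
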